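/- arXiv:2501.19369 — 2 statements merged into one kernel-verified Lean document; each statement's English description precedes it below -/
import Mathlib

section
/- Suppose X = Y and c(x,y) = d(x,y) is the metric of X. Let (β_n) be a sequence of positive reals with β_n → +∞, and for each n let (φ_n, ψ_n) be a pair of β_n-potentials. If φ_n/β_n converges uniformly to φ : X → ℝ (and ψ_n/β_n converges uniformly to some ψ), then Lip(φ) ≤ 1 and ∫ φ dμ − ∫ φ dν = α(c); that is, φ solves the Kantorovich–Rubinstein dual problem. -/
/-!
Let `πₙ = e^{βₙ A + φₙ ⊕ ψₙ} (μ ⊗ ν)`; the two potential equations say exactly that `πₙ` has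
marginals `μ` and `ν`. The equation in `x` and the triangle inequality make `φₙ / βₙ`
1-Lipschitz, hence so is `φ`, and Kantorovich–Rubinstein weak duality gives
`∫ φ dμ - ∫ φ dν ≤ α(c)`. Conversely, the relative entropy of `πₙ` with respect to `μ ⊗ ν` is
nonnegative, i.e. `∫ (βₙ A + φₙ ⊕ ψₙ) dπₙ ≥ 0`, so
`α(c) ≤ ∫ c dπₙ ≤ (∫ φₙ dμ + ∫ ψₙ dν) / βₙ → ∫ φ dμ + ∫ ψ dν`.
Restricting the integral in the equation for `y` to the ball `B(y, ε)` gives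
`φₙ y + ψₙ y ≤ 2 βₙ ε - log μ(B(y, ε))`, so `φ + ψ ≤ 0`, which closes the chain.
-/

open MeasureTheory Filter

open Classical in
noncomputable def negKL {X Y : Type*} [MeasurableSpace X] [MeasurableSpace Y]
    (μ : Measure X) (ν : Measure Y) (π : Measure (X × Y)) : EReal :=
  if π ≪ μ.prod ν ∧ Integrable (llr π (μ.prod ν)) π
  then ((- ∫ p, llr π (μ.prod ν) p ∂π : ℝ) : EReal)
  else ⊥

def IsPlan {X Y : Type*} [MeasurableSpace X] [MeasurableSpace Y]
    (μ : Measure X) (ν : Measure Y) (π : Measure (X × Y)) : Prop :=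
  IsProbabilityMeasure π ∧ π.map Prod.fst = μ ∧ π.map Prod.snd = ν

noncomputable def pressure {X Y : Type*} [MeasurableSpace X] [MeasurableSpace Y]
    (μ : Measure X) (ν : Measure Y) (B : X × Y → ℝ) : EReal :=
  ⨆ π : {π : Measure (X × Y) // IsPlan μ ν π},
    ((∫ p, B p ∂(π.1) : ℝ) : EReal) + negKL μ ν π.1

noncomputable def transportCost {X Y : Type*} [MeasurableSpace X] [MeasurableSpace Y]
    (μ : Measure X) (ν : Measure Y) (c : X × Y → ℝ) : ℝ :=
  ⨅ π : {π : Measure (X × Y) // IsPlan μ ν π}, ∫ p, c p ∂(π.1)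

noncomputable def maxVal {X Y : Type*} [MeasurableSpace X] [MeasurableSpace Y]
    (μ : Measure X) (ν : Measure Y) (A : X × Y → ℝ) : ℝ :=
  ⨆ π : {π : Measure (X × Y) // IsPlan μ ν π}, ∫ p, A p ∂(π.1)

noncomputable def Hmax {X Y : Type*} [MeasurableSpace X] [MeasurableSpace Y]
    (μ : Measure X) (ν : Measure Y) (A : X × Y → ℝ) : EReal :=
  ⨆ π : {π : Measure (X × Y) // IsPlan μ ν π ∧ ∫ p, A p ∂π = maxVal μ ν A},
    negKL μ ν π.1

open Metric
open scoped ENNReal Topology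

section Integration

variable {α : Type*} [MeasurableSpace α] {μ : Measure α}

lemma TendstoUniformly.tendsto_integral {ι : Type*} {l : Filter ι} [l.IsCountablyGenerated]
    [IsFiniteMeasure μ] {F : ι → α → ℝ} {f : α → ℝ}
    (hF : ∀ᶠ i in l, AEStronglyMeasurable (F i) μ) (hf : Integrable f μ)
    (h : TendstoUniformly F f l) :
    Tendsto (fun i => ∫ x, F i x ∂μ) l (𝓝 (∫ x, f x ∂μ)) := by
  refine tendsto_integral_filter_of_dominated_convergence (fun x => ‖f x‖ + 1) hF ?_
    (hf.norm.add (integrable_const 1)) (ae_of_all _ h.tendsto_at)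
  filter_upwards [Metric.tendstoUniformly_iff.1 h 1 one_pos] with i hi
  refine ae_of_all _ fun x => ?_
  have hclose : ‖F i x - f x‖ ≤ 1 := by rw [← dist_eq_norm, dist_comm]; exact (hi x).le
  linarith [norm_le_norm_add_norm_sub' (F i x) (f x)]

lemma Continuous.integrable_of_compactSpace [TopologicalSpace α] [CompactSpace α]
    [OpensMeasurableSpace α] [IsFiniteMeasure μ] {f : α → ℝ} (hf : Continuous f) :
    Integrable f μ :=
  hf.integrable_of_hasCompactSupport (HasCompactSupport.of_compactSpace f)

end Integration

lemma Real.exp_sub_one_le_exp_mul (x : ℝ) : Real.exp x - 1 ≤ Real.exp x * x := by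
  have h := mul_le_mul_of_nonneg_left (Real.add_one_le_exp (-x)) (Real.exp_pos x).le
  rw [← Real.exp_add, add_neg_cancel, Real.exp_zero] at h
  linarith

section Plans

variable {X Y : Type*} [MeasurableSpace X] [MeasurableSpace Y]
  {μ : Measure X} {ν : Measure Y} {π : Measure (X × Y)}

lemma IsPlan.integral_comp_fst (hπ : IsPlan μ ν π) {f : X → ℝ}
    (hf : AEStronglyMeasurable f μ) : ∫ p, f p.1 ∂π = ∫ x, f x ∂μ := by
  rw [← hπ.2.1, integral_map measurable_fst.aemeasurable (hπ.2.1 ▸ hf)]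

lemma IsPlan.integral_comp_snd (hπ : IsPlan μ ν π) {f : Y → ℝ}
    (hf : AEStronglyMeasurable f ν) : ∫ p, f p.2 ∂π = ∫ y, f y ∂ν := by
  rw [← hπ.2.2, integral_map measurable_snd.aemeasurable (hπ.2.2 ▸ hf)]

lemma isPlan_prod [IsProbabilityMeasure μ] [IsProbabilityMeasure ν] :
    IsPlan μ ν (μ.prod ν) :=
  ⟨inferInstance, by simp, by simp⟩

lemma transportCost_le {c : X × Y → ℝ} (hc : ∀ p, 0 ≤ c p) (hπ : IsPlan μ ν π) :
    transportCost μ ν c ≤ ∫ p, c p ∂π :=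
  ciInf_le ⟨0, by rintro _ ⟨π', rfl⟩; exact integral_nonneg hc⟩
    (⟨π, hπ⟩ : {π // IsPlan μ ν π})

end Plans

lemma integral_sub_integral_le_transportCost_dist {X : Type*} [PseudoMetricSpace X]
    [CompactSpace X] [MeasurableSpace X] [BorelSpace X]
    {μ ν : Measure X} [IsProbabilityMeasure μ] [IsProbabilityMeasure ν]
    {φ : X → ℝ} (hφ : LipschitzWith 1 φ) :
    ∫ x, φ x ∂μ - ∫ x, φ x ∂ν ≤ transportCost μ ν fun p => dist p.1 p.2 := by
  have : Nonempty {π : Measure (X × X) // IsPlan μ ν π} := ⟨⟨μ.prod ν, isPlan_prod⟩⟩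
  refine le_ciInf fun ⟨π, hπ⟩ => ?_
  have := hπ.1
  have hφc := hφ.continuous
  have hint : ∀ f : X × X → ℝ, Continuous f → Integrable f π :=
    fun f hf => hf.integrable_of_compactSpace
  calc ∫ x, φ x ∂μ - ∫ x, φ x ∂ν
      = ∫ p, (φ p.1 - φ p.2) ∂π := by
        rw [integral_sub (hint _ (by fun_prop)) (hint _ (by fun_prop)),
          hπ.integral_comp_fst hφc.aestronglyMeasurable,
          hπ.integral_comp_snd hφc.aestronglyMeasurable]
    _ ≤ ∫ p, dist p.1 p.2 ∂π :=
        integral_mono (hint _ (by fun_prop)) (hint _ (by fun_prop)) fun p =>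
          by simpa [Real.dist_eq] using (le_abs_self _).trans (hφ.dist_le_mul p.1 p.2)

/-- A pair of `β`-potentials in the sense of the paper, for `B = β A`. -/
def IsPotentialPair {X Y : Type*} [MeasurableSpace X] [MeasurableSpace Y]
    (μ : Measure X) (ν : Measure Y) (B : X × Y → ℝ) (φ : X → ℝ) (ψ : Y → ℝ) : Prop :=
  (∀ y, ∫ x, Real.exp (B (x, y) + φ x + ψ y) ∂μ = 1) ∧
    ∀ x, ∫ y, Real.exp (B (x, y) + φ x + ψ y) ∂ν = 1

noncomputable def gibbsPlan {X Y : Type*} [MeasurableSpace X] [MeasurableSpace Y]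
    (μ : Measure X) (ν : Measure Y) (B : X × Y → ℝ) (φ : X → ℝ) (ψ : Y → ℝ) :
    Measure (X × Y) :=
  (μ.prod ν).withDensity fun p => ENNReal.ofReal (Real.exp (B p + φ p.1 + ψ p.2))

namespace IsPotentialPair

section General

variable {X Y : Type*} [MeasurableSpace X] [MeasurableSpace Y] {μ : Measure X} {ν : Measure Y}
  {B : X × Y → ℝ} {φ : X → ℝ} {ψ : Y → ℝ}

lemma sub_le_of_le_add (h : IsPotentialPair μ ν B φ ψ) {x₁ x₂ : X} {r : ℝ}
    (hB : ∀ y, B (x₂, y) ≤ B (x₁, y) + r) : φ x₁ - φ x₂ ≤ r := by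
  have hint := integrable_of_integral_eq_one (h.2 x₁)
  have key : 1 ≤ Real.exp (r + φ x₂ - φ x₁) := by
    calc (1 : ℝ) = ∫ y, Real.exp (B (x₂, y) + φ x₂ + ψ y) ∂ν := (h.2 x₂).symm
      _ ≤ ∫ y, Real.exp (r + φ x₂ - φ x₁) * Real.exp (B (x₁, y) + φ x₁ + ψ y) ∂ν := by
        refine integral_mono_of_nonneg (ae_of_all _ fun y => (Real.exp_pos _).le)
          (hint.const_mul _) (ae_of_all _ fun y => ?_)
        beta_reduce
        rw [← Real.exp_add, Real.exp_le_exp]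
        linarith [hB y]
      _ = Real.exp (r + φ x₂ - φ x₁) := by rw [integral_const_mul, h.2 x₁, mul_one]
  linarith [Real.one_le_exp_iff.1 key]

lemma le_neg_log_measureReal (h : IsPotentialPair μ ν B φ ψ) {y : Y} {s : Set X}
    (hs : MeasurableSet s) (hμs : 0 < μ.real s) {t : ℝ}
    (ht : ∀ x ∈ s, t ≤ B (x, y) + φ x + ψ y) : t ≤ -Real.log (μ.real s) := by
  have hint := integrable_of_integral_eq_one (h.1 y)
  have hfin : μ s ≠ ∞ := fun h' => by simp [measureReal_def, h'] at hμs
  have key : Real.exp t * μ.real s ≤ 1 := by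
    calc Real.exp t * μ.real s = ∫ _ in s, Real.exp t ∂μ := by
          rw [setIntegral_const, smul_eq_mul, mul_comm]
      _ ≤ ∫ x in s, Real.exp (B (x, y) + φ x + ψ y) ∂μ :=
        setIntegral_mono_on (integrableOn_const hfin) hint.integrableOn hs
          fun x hx => Real.exp_le_exp.2 (ht x hx)
      _ ≤ ∫ x, Real.exp (B (x, y) + φ x + ψ y) ∂μ :=
        setIntegral_le_integral hint (ae_of_all _ fun x => (Real.exp_pos _).le)
      _ = 1 := h.1 y
  rw [← Real.log_inv, Real.le_log_iff_exp_le (inv_pos.2 hμs)]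
  rwa [← one_div, le_div_iff₀ hμs]

end General

section Gibbs

variable {X Y : Type*} [MeasurableSpace X] [MeasurableSpace Y] {μ : Measure X} {ν : Measure Y}
  {B : X × Y → ℝ} {φ : X → ℝ} {ψ : Y → ℝ}

lemma integral_gibbsPlan (hm : Measurable fun p : X × Y => B p + φ p.1 + ψ p.2)
    (g : X × Y → ℝ) :
    ∫ p, g p ∂(gibbsPlan μ ν B φ ψ) =
      ∫ p, Real.exp (B p + φ p.1 + ψ p.2) * g p ∂(μ.prod ν) := by
  rw [gibbsPlan, integral_withDensity_eq_integral_toReal_smul hm.exp.ennreal_ofReal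
    (ae_of_all _ fun _ => ENNReal.ofReal_lt_top)]
  simp only [ENNReal.toReal_ofReal (Real.exp_pos _).le, smul_eq_mul]

variable [SFinite μ] [SFinite ν]

lemma map_fst_gibbsPlan (h : IsPotentialPair μ ν B φ ψ)
    (hm : Measurable fun p : X × Y => B p + φ p.1 + ψ p.2) :
    (gibbsPlan μ ν B φ ψ).map Prod.fst = μ := by
  ext s hs
  have hfiber : ∀ x, ∫⁻ y, ENNReal.ofReal (Real.exp (B (x, y) + φ x + ψ y)) ∂ν = 1 := fun x => by
    rw [← ofReal_integral_eq_lintegral_ofReal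
      (integrable_of_integral_eq_one (h.2 x))
      (ae_of_all _ fun y => (Real.exp_pos _).le), h.2 x, ENNReal.ofReal_one]
  rw [Measure.map_apply measurable_fst hs, gibbsPlan, withDensity_apply _ (measurable_fst hs),
    ← Set.prod_univ, ← Measure.prod_restrict, Measure.restrict_univ,
    lintegral_prod _ hm.exp.ennreal_ofReal.aemeasurable,
    lintegral_congr fun _ => hfiber _, lintegral_one, Measure.restrict_apply_univ]

lemma map_snd_gibbsPlan (h : IsPotentialPair μ ν B φ ψ)
    (hm : Measurable fun p : X × Y => B p + φ p.1 + ψ p.2) :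
    (gibbsPlan μ ν B φ ψ).map Prod.snd = ν := by
  ext s hs
  have hfiber : ∀ y, ∫⁻ x, ENNReal.ofReal (Real.exp (B (x, y) + φ x + ψ y)) ∂μ = 1 := fun y => by
    rw [← ofReal_integral_eq_lintegral_ofReal
      (integrable_of_integral_eq_one (h.1 y))
      (ae_of_all _ fun x => (Real.exp_pos _).le), h.1 y, ENNReal.ofReal_one]
  rw [Measure.map_apply measurable_snd hs, gibbsPlan, withDensity_apply _ (measurable_snd hs),
    ← Set.univ_prod, ← Measure.prod_restrict, Measure.restrict_univ,
    lintegral_prod_symm _ hm.exp.ennreal_ofReal.aemeasurable,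
    lintegral_congr fun _ => hfiber _, lintegral_one, Measure.restrict_apply_univ]

lemma isPlan_gibbsPlan [IsProbabilityMeasure μ] (h : IsPotentialPair μ ν B φ ψ)
    (hm : Measurable fun p : X × Y => B p + φ p.1 + ψ p.2) :
    IsPlan μ ν (gibbsPlan μ ν B φ ψ) := by
  refine ⟨⟨?_⟩, h.map_fst_gibbsPlan hm, h.map_snd_gibbsPlan hm⟩
  rw [← Set.preimage_univ (f := Prod.fst), ← Measure.map_apply measurable_fst .univ,
    h.map_fst_gibbsPlan hm, measure_univ]

lemma integral_exponent_gibbsPlan_nonneg [IsProbabilityMeasure μ] [IsProbabilityMeasure ν]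
    (h : IsPotentialPair μ ν B φ ψ) (hm : Measurable fun p : X × Y => B p + φ p.1 + ψ p.2)
    (hint : Integrable (fun p : X × Y =>
      Real.exp (B p + φ p.1 + ψ p.2) * (B p + φ p.1 + ψ p.2)) (μ.prod ν)) :
    0 ≤ ∫ p, (B p + φ p.1 + ψ p.2) ∂(gibbsPlan μ ν B φ ψ) := by
  have := (h.isPlan_gibbsPlan hm).1
  have hmass : ∫ p, Real.exp (B p + φ p.1 + ψ p.2) ∂(μ.prod ν) = 1 := by
    have := integral_gibbsPlan (μ := μ) (ν := ν) hm fun _ => (1 : ℝ)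
    simp only [integral_const, probReal_univ, smul_eq_mul, mul_one] at this
    exact this.symm
  have hexp := integrable_of_integral_eq_one hmass
  rw [integral_gibbsPlan hm]
  calc (0 : ℝ) = ∫ p, (Real.exp (B p + φ p.1 + ψ p.2) - 1) ∂(μ.prod ν) := by
        rw [integral_sub hexp (integrable_const 1), hmass]; simp
    _ ≤ _ := integral_mono (hexp.sub (integrable_const 1)) hint fun p =>
        Real.exp_sub_one_le_exp_mul _

end Gibbs

section Compact

variable {X Y : Type*} [PseudoMetricSpace X] [CompactSpace X] [MeasurableSpace X] [BorelSpace X]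
  [PseudoMetricSpace Y] [CompactSpace Y] [MeasurableSpace Y] [BorelSpace Y]
  {μ : Measure X} {ν : Measure Y} [IsProbabilityMeasure μ] [IsProbabilityMeasure ν]
  {B : X × Y → ℝ} {φ : X → ℝ} {ψ : Y → ℝ}

lemma neg_integral_gibbsPlan_le (h : IsPotentialPair μ ν B φ ψ) (hB : Continuous B)
    (hφ : Continuous φ) (hψ : Continuous ψ) :
    -∫ p, B p ∂(gibbsPlan μ ν B φ ψ) ≤ ∫ x, φ x ∂μ + ∫ y, ψ y ∂ν := by
  have hL : Continuous fun p : X × Y => B p + φ p.1 + ψ p.2 := by fun_prop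
  have hπ := h.isPlan_gibbsPlan hL.measurable
  have := hπ.1
  have hent := h.integral_exponent_gibbsPlan_nonneg hL.measurable
    (Continuous.integrable_of_compactSpace (by fun_prop))
  have hint : ∀ f : X × Y → ℝ, Continuous f → Integrable f (gibbsPlan μ ν B φ ψ) :=
    fun f hf => hf.integrable_of_compactSpace
  rw [integral_add (hint (fun p => B p + φ p.1) (by fun_prop))
      (hint (fun p => ψ p.2) (by fun_prop)),
    integral_add (hint B hB) (hint (fun p => φ p.1) (by fun_prop)),
    hπ.integral_comp_fst hφ.aestronglyMeasurable,
    hπ.integral_comp_snd hψ.aestronglyMeasurable] at hent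
  linarith

end Compact

section Distance

variable {X : Type*} [PseudoMetricSpace X] [MeasurableSpace X] {μ ν : Measure X}
  {β : ℝ} {φ ψ : X → ℝ}

lemma sub_le_mul_dist (h : IsPotentialPair μ ν (fun p => β * -dist p.1 p.2) φ ψ)
    (hβ : 0 ≤ β) (x₁ x₂ : X) : φ x₁ - φ x₂ ≤ β * dist x₁ x₂ :=
  h.sub_le_of_le_add fun y => by nlinarith [dist_triangle x₁ x₂ y]

lemma lipschitzWith_div (h : IsPotentialPair μ ν (fun p => β * -dist p.1 p.2) φ ψ)
    (hβ : 0 < β) : LipschitzWith 1 fun x => φ x / β :=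
  LipschitzWith.of_le_add fun x₁ x₂ => by
    rw [← sub_le_iff_le_add', ← sub_div, div_le_iff₀' hβ]
    exact h.sub_le_mul_dist hβ.le x₁ x₂

lemma add_le_sub_log_measureReal_ball [OpensMeasurableSpace X] [IsFiniteMeasure μ]
    [μ.IsOpenPosMeasure]
    (h : IsPotentialPair μ ν (fun p => β * -dist p.1 p.2) φ ψ) (hβ : 0 ≤ β) (y : X)
    {r : ℝ} (hr : 0 < r) : φ y + ψ y ≤ 2 * β * r - Real.log (μ.real (ball y r)) := by
  have hball : 0 < μ.real (ball y r) :=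
    ENNReal.toReal_pos (measure_ball_pos μ y hr).ne' (measure_ne_top μ _)
  have := h.le_neg_log_measureReal measurableSet_ball hball (t := φ y + ψ y - 2 * β * r)
    fun x hx => by
      have hxy : β * dist y x ≤ β * r := by
        gcongr
        exact (mem_ball'.1 hx).le
      nlinarith [h.sub_le_mul_dist hβ y x, dist_comm x y]
  linarith

lemma add_nonpos_of_tendsto [OpensMeasurableSpace X] [IsFiniteMeasure μ] [μ.IsOpenPosMeasure]
    {ι : Type*} {l : Filter ι} [l.NeBot] {β : ι → ℝ} {φs ψs : ι → X → ℝ}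
    (h : ∀ i, IsPotentialPair μ ν (fun p => β i * -dist p.1 p.2) (φs i) (ψs i))
    (hβ : ∀ i, 0 < β i) (hβtop : Tendsto β l atTop) {y : X} {a b : ℝ}
    (ha : Tendsto (fun i => φs i y / β i) l (𝓝 a))
    (hb : Tendsto (fun i => ψs i y / β i) l (𝓝 b)) : a + b ≤ 0 := by
  refine le_of_forall_pos_le_add fun ε hε => ?_
  set m := μ.real (ball y (ε / 2))
  have hbound : ∀ i, φs i y / β i + ψs i y / β i ≤ ε - Real.log m / β i := fun i => by
    have := (h i).add_le_sub_log_measureReal_ball (hβ i).le y (half_pos hε)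
    rw [← add_div, div_le_iff₀ (hβ i), sub_mul, div_mul_cancel₀ _ (hβ i).ne']
    linarith
  have hlim : Tendsto (fun i => ε - Real.log m / β i) l (𝓝 (0 + ε)) := by
    simpa using tendsto_const_nhds.sub (tendsto_const_nhds.div_atTop hβtop)
  exact le_of_tendsto_of_tendsto' (ha.add hb) hlim hbound

lemma transportCost_dist_le [CompactSpace X] [BorelSpace X] [IsProbabilityMeasure μ]
    [IsProbabilityMeasure ν] (h : IsPotentialPair μ ν (fun p => β * -dist p.1 p.2) φ ψ)
    (hβ : 0 < β) (hφ : Continuous φ) (hψ : Continuous ψ) :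
    transportCost μ ν (fun p => dist p.1 p.2) ≤ (∫ x, φ x ∂μ + ∫ y, ψ y ∂ν) / β := by
  have hB : Continuous fun p : X × X => β * -dist p.1 p.2 := by fun_prop
  have hent := h.neg_integral_gibbsPlan_le hB hφ hψ
  rw [integral_const_mul, integral_neg, mul_neg, neg_neg] at hent
  calc transportCost μ ν (fun p => dist p.1 p.2)
      ≤ ∫ p, dist p.1 p.2 ∂(gibbsPlan μ ν (fun p => β * -dist p.1 p.2) φ ψ) :=
        transportCost_le (fun _ => dist_nonneg) (h.isPlan_gibbsPlan (by fun_prop))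
    _ ≤ (∫ x, φ x ∂μ + ∫ y, ψ y ∂ν) / β := by rwa [le_div_iff₀' hβ]

end Distance

end IsPotentialPair

theorem stmt12_general
    {X : Type*}
    [MetricSpace X] [CompactSpace X] [MeasurableSpace X] [BorelSpace X]
    (μ : Measure X) [IsProbabilityMeasure μ] [μ.IsOpenPosMeasure]
    (ν : Measure X) [IsProbabilityMeasure ν]
    (c : X × X → ℝ) (hc : c = fun p => dist p.1 p.2)
    (A : X × X → ℝ) (hA : A = fun p => - c p)
    (βs : ℕ → ℝ) (hβpos : ∀ n, 0 < βs n) (hβtop : Tendsto βs atTop atTop)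
    (φs ψs : ℕ → X → ℝ)
    (hφc : ∀ n, Continuous (φs n)) (hψc : ∀ n, Continuous (ψs n))
    (h1 : ∀ n, ∀ y : X, ∫ x, Real.exp (βs n * A (x, y) + φs n x + ψs n y) ∂μ = 1)
    (h2 : ∀ n, ∀ x : X, ∫ y, Real.exp (βs n * A (x, y) + φs n x + ψs n y) ∂ν = 1)
    (φ ψ : X → ℝ)
    (hφ : TendstoUniformly (fun n x => φs n x / βs n) φ atTop)
    (hψ : TendstoUniformly (fun n y => ψs n y / βs n) ψ atTop) :
    (∀ x₁ x₂ : X, |φ x₁ - φ x₂| ≤ dist x₁ x₂) ∧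
    ∫ x, φ x ∂μ - ∫ x, φ x ∂ν = transportCost μ ν c := by
  subst hc hA
  have hpot (n : ℕ) : IsPotentialPair μ ν (fun p => βs n * -dist p.1 p.2) (φs n) (ψs n) :=
    ⟨h1 n, h2 n⟩
  have hφLip : LipschitzWith 1 φ :=
    (isClosed_setOfPred_lipschitzWith 1).mem_of_tendsto (tendsto_pi_nhds.2 hφ.tendsto_at)
      (Eventually.of_forall fun n => (hpot n).lipschitzWith_div (hβpos n))
  have hφψ (y : X) : φ y + ψ y ≤ 0 :=
    IsPotentialPair.add_nonpos_of_tendsto hpot hβpos hβtop (hφ.tendsto_at y) (hψ.tendsto_at y)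
  have hφcont := hφLip.continuous
  have hψcont : Continuous ψ := hψ.continuous (.of_forall fun n => (hψc n).div_const _)
  have hlim : Tendsto (fun n => ∫ x, φs n x / βs n ∂μ + ∫ y, ψs n y / βs n ∂ν) atTop
      (𝓝 (∫ x, φ x ∂μ + ∫ y, ψ y ∂ν)) :=
    (hφ.tendsto_integral (.of_forall fun n => ((hφc n).div_const _).aestronglyMeasurable)
      hφcont.integrable_of_compactSpace).add
    (hψ.tendsto_integral (.of_forall fun n => ((hψc n).div_const _).aestronglyMeasurable)
      hψcont.integrable_of_compactSpace)
  have hcost (n : ℕ) : transportCost μ ν (fun p => dist p.1 p.2) ≤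
      ∫ x, φs n x / βs n ∂μ + ∫ y, ψs n y / βs n ∂ν := by
    rw [integral_div, integral_div, ← add_div]
    exact (hpot n).transportCost_dist_le (hβpos n) (hφc n) (hψc n)
  have hψν : ∫ y, ψ y ∂ν ≤ -∫ y, φ y ∂ν := by
    rw [← integral_neg]
    exact integral_mono hψcont.integrable_of_compactSpace hφcont.neg.integrable_of_compactSpace
      fun y => by linarith [hφψ y]
  refine ⟨fun x₁ x₂ => by simpa [Real.dist_eq] using hφLip.dist_le_mul x₁ x₂,
    le_antisymm (integral_sub_integral_le_transportCost_dist hφLip) ?_⟩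
  linarith [ge_of_tendsto' hlim hcost]

theorem stmt12
    {X : Type*}
    [MetricSpace X] [CompactSpace X] [MeasurableSpace X] [BorelSpace X]
    (μ : Measure X) [IsProbabilityMeasure μ] [μ.IsOpenPosMeasure]
    (ν : Measure X) [IsProbabilityMeasure ν] [ν.IsOpenPosMeasure]
    (c : X × X → ℝ) (hc : c = fun p => dist p.1 p.2)
    (A : X × X → ℝ) (hA : A = fun p => - c p)
    (βs : ℕ → ℝ) (hβpos : ∀ n, 0 < βs n) (hβtop : Tendsto βs atTop atTop)
    (φs ψs : ℕ → X → ℝ)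
    (hφc : ∀ n, Continuous (φs n)) (hψc : ∀ n, Continuous (ψs n))
    (h1 : ∀ n, ∀ y : X, ∫ x, Real.exp (βs n * A (x, y) + φs n x + ψs n y) ∂μ = 1)
    (h2 : ∀ n, ∀ x : X, ∫ y, Real.exp (βs n * A (x, y) + φs n x + ψs n y) ∂ν = 1)
    (φ ψ : X → ℝ)
    (hφ : TendstoUniformly (fun n x => φs n x / βs n) φ atTop)
    (hψ : TendstoUniformly (fun n y => ψs n y / βs n) ψ atTop) :
    (∀ x₁ x₂ : X, |φ x₁ - φ x₂| ≤ dist x₁ x₂) ∧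
    ∫ x, φ x ∂μ - ∫ x, φ x ∂ν = transportCost μ ν c :=
  stmt12_general μ ν c hc A hA βs hβpos hβtop φs ψs hφc hψc h1 h2 φ ψ hφ hψ
end

section
/- For each β > 0 let (φ_β, ψ_β) be a pair of β-potentials and let π_β be the probability measure on X×Y with density e^{βA+φ_β+ψ_β} with respect to μ×ν. Suppose φ_β/β → φ uniformly and ψ_β/β → ψ uniformly as β → +∞. Then for every continuous f : X×Y → ℝ, lim_{β→+∞} (1/β) log ∫ e^{βf} dπ_β = sup_{(x,y)∈X×Y} [A(x,y) + φ(x) + ψ(y) + f(x,y)]. -/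
open MeasureTheory Filter

/-!
Laplace's principle. For continuous `g` on a compact space and a measure charging every open set,
`∫ exp (β g)` lies between `m {g > c} * exp (β c)` for any `c < sup g` and `m univ * exp (β sup g)`,
so `β⁻¹ log ∫ exp (β g) → sup g`. Since `log ∫ exp` is `1`-Lipschitz for the sup norm, the same
limit holds for any `G β` with `G β / β → g` uniformly. Here `G β = βA + φ_β + ψ_β + βf` is the
log-density of `exp (β f) dπ_β` with respect to `μ × ν`, and `G β / β → A + φ + ψ + f` uniformly.
-/

open Real Set Topology

lemma tendsto_add_inv_mul_atTop (c k : ℝ) :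
    Tendsto (fun β : ℝ => c + β⁻¹ * k) atTop (𝓝 c) := by
  simpa using tendsto_const_nhds.add (tendsto_inv_atTop_zero.mul_const k)

namespace MeasureTheory

variable {Z : Type*} [MeasurableSpace Z] {m : Measure Z}

lemma integral_withDensity_ofReal_exp {h : Z → ℝ} (hh : Measurable h) (F : Z → ℝ) :
    ∫ z, F z ∂(m.withDensity fun z => ENNReal.ofReal (exp (h z))) = ∫ z, exp (h z) * F z ∂m := by
  rw [integral_withDensity_eq_integral_toReal_smul hh.exp.ennreal_ofReal
    (ae_of_all _ fun _ => ENNReal.ofReal_lt_top)]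
  simp only [ENNReal.toReal_ofReal (exp_nonneg _), smul_eq_mul]

section LogIntegralExp

variable {F G : Z → ℝ}

lemma log_integral_exp_le_add [NeZero m] {η : ℝ} (hF : Integrable (fun z => exp (F z)) m)
    (hG : Integrable (fun z => exp (G z)) m) (hFG : ∀ z, F z ≤ G z + η) :
    log (∫ z, exp (F z) ∂m) ≤ log (∫ z, exp (G z) ∂m) + η := by
  have hle : ∫ z, exp (F z) ∂m ≤ (∫ z, exp (G z) ∂m) * exp η := by
    rw [← integral_mul_const]
    refine integral_mono hF (hG.mul_const _) fun z => ?_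
    simpa only [← exp_add] using exp_le_exp.2 (hFG z)
  calc log (∫ z, exp (F z) ∂m) ≤ log ((∫ z, exp (G z) ∂m) * exp η) :=
        log_le_log (integral_exp_pos hF) hle
    _ = log (∫ z, exp (G z) ∂m) + η := by
        rw [log_mul (integral_exp_pos hG).ne' (exp_pos η).ne', log_exp]

lemma abs_log_integral_exp_sub_le [NeZero m] {η : ℝ} (hF : Integrable (fun z => exp (F z)) m)
    (hG : Integrable (fun z => exp (G z)) m) (hFG : ∀ z, |F z - G z| ≤ η) :
    |log (∫ z, exp (F z) ∂m) - log (∫ z, exp (G z) ∂m)| ≤ η := by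
  have h₁ := log_integral_exp_le_add hF hG fun z => by linarith [(abs_le.1 (hFG z)).2]
  have h₂ := log_integral_exp_le_add hG hF fun z => by linarith [(abs_le.1 (hFG z)).1]
  exact abs_sub_le_iff.2 ⟨by linarith, by linarith⟩

lemma log_integral_exp_le [IsFiniteMeasure m] [NeZero m] {M : ℝ}
    (hF : Integrable (fun z => exp (F z)) m) (hFM : ∀ z, F z ≤ M) :
    log (∫ z, exp (F z) ∂m) ≤ M + log (m.real univ) := by
  have hG : Integrable (fun _ : Z => exp M) m := integrable_const _
  have h := log_integral_exp_le_add (η := 0) hF hG fun z => by rw [add_zero]; exact hFM z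
  rwa [integral_const, smul_eq_mul, log_mul (measureReal_univ_pos).ne' (exp_pos M).ne', log_exp,
    add_zero, add_comm] at h

lemma add_log_measureReal_le_log_integral_exp [IsFiniteMeasure m] {s : Set Z} {c : ℝ}
    (hs : MeasurableSet s) (hms : 0 < m s) (hF : Integrable (fun z => exp (F z)) m)
    (hcF : ∀ z ∈ s, c ≤ F z) :
    c + log (m.real s) ≤ log (∫ z, exp (F z) ∂m) := by
  have hrs : 0 < m.real s := ENNReal.toReal_pos hms.ne' (measure_ne_top m s)
  have hle : m.real s * exp c ≤ ∫ z, exp (F z) ∂m :=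
    calc m.real s * exp c = ∫ _ in s, exp c ∂m := by rw [setIntegral_const, smul_eq_mul]
      _ ≤ ∫ z in s, exp (F z) ∂m :=
          setIntegral_mono_on (integrableOn_const (measure_ne_top m s)) hF.integrableOn hs
            fun z hz => exp_le_exp.2 (hcF z hz)
      _ ≤ ∫ z, exp (F z) ∂m := setIntegral_le_integral hF (ae_of_all _ fun z => (exp_pos _).le)
  calc c + log (m.real s) = log (m.real s * exp c) := by
        rw [log_mul hrs.ne' (exp_pos c).ne', log_exp, add_comm]
    _ ≤ log (∫ z, exp (F z) ∂m) := log_le_log (by positivity) hle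

end LogIntegralExp

section Laplace

variable [TopologicalSpace Z] [CompactSpace Z] [OpensMeasurableSpace Z] [IsFiniteMeasure m]

lemma integrable_exp_of_continuous {F : Z → ℝ} (hF : Continuous F) :
    Integrable (fun z => exp (F z)) m :=
  (continuous_exp.comp hF).integrable_of_hasCompactSupport (.of_compactSpace _)

variable (m) [NeZero m] [m.IsOpenPosMeasure]

theorem tendsto_inv_mul_log_integral_exp_mul {g : Z → ℝ} (hg : Continuous g) :
    Tendsto (fun β => β⁻¹ * log (∫ z, exp (β * g z) ∂m)) atTop (𝓝 (⨆ z, g z)) := by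
  have : Nonempty Z := m.nonempty_of_neZero
  have hint (β : ℝ) : Integrable (fun z => exp (β * g z)) m :=
    integrable_exp_of_continuous (continuous_const.mul hg)
  refine tendsto_order.2 ⟨fun a ha => ?_, fun b hb => ?_⟩
  · obtain ⟨c, hac, hc⟩ := exists_between ha
    obtain ⟨z₀, hz₀⟩ := exists_lt_of_lt_ciSup hc
    have hU : 0 < m {z | c < g z} := (isOpen_lt continuous_const hg).measure_pos m ⟨z₀, hz₀⟩
    filter_upwards [eventually_gt_atTop 0,
      (tendsto_add_inv_mul_atTop c (log (m.real {z | c < g z}))).eventually (lt_mem_nhds hac)]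
      with β hβ hlt
    refine hlt.trans_le ?_
    have h := add_log_measureReal_le_log_integral_exp (measurableSet_lt measurable_const
      hg.measurable) hU (hint β) fun z hz => mul_le_mul_of_nonneg_left (le_of_lt hz) hβ.le
    calc c + β⁻¹ * log (m.real {z | c < g z})
        = β⁻¹ * (β * c + log (m.real {z | c < g z})) := by rw [mul_add, inv_mul_cancel_left₀ hβ.ne']
      _ ≤ β⁻¹ * log (∫ z, exp (β * g z) ∂m) := mul_le_mul_of_nonneg_left h (inv_nonneg.2 hβ.le)
  · have hbdd : BddAbove (range g) := (isCompact_range hg).bddAbove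
    filter_upwards [eventually_gt_atTop 0,
      (tendsto_add_inv_mul_atTop (⨆ z, g z) (log (m.real univ))).eventually (gt_mem_nhds hb)]
      with β hβ hlt
    refine lt_of_le_of_lt ?_ hlt
    have h := log_integral_exp_le (hint β) fun z =>
      mul_le_mul_of_nonneg_left (le_ciSup hbdd z) hβ.le
    calc β⁻¹ * log (∫ z, exp (β * g z) ∂m)
        ≤ β⁻¹ * (β * (⨆ z, g z) + log (m.real univ)) :=
          mul_le_mul_of_nonneg_left h (inv_nonneg.2 hβ.le)
      _ = (⨆ z, g z) + β⁻¹ * log (m.real univ) := by rw [mul_add, inv_mul_cancel_left₀ hβ.ne']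

theorem tendsto_inv_mul_log_integral_exp_of_tendstoUniformly {G : ℝ → Z → ℝ} {g : Z → ℝ}
    (hG : ∀ᶠ β in atTop, Continuous (G β))
    (hGg : TendstoUniformly (fun β z => G β z / β) g atTop) :
    Tendsto (fun β => β⁻¹ * log (∫ z, exp (G β z) ∂m)) atTop (𝓝 (⨆ z, g z)) := by
  have hg : Continuous g :=
    hGg.continuous (hG.mono fun β hβ => hβ.div_const β).frequently
  refine (tendsto_inv_mul_log_integral_exp_mul m hg).congr_dist
    (Metric.tendsto_nhds.2 fun ε hε => ?_)
  filter_upwards [eventually_gt_atTop 0, hG, Metric.tendstoUniformly_iff.1 hGg (ε / 2)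
    (half_pos hε)] with β hβ hGβ hclose
  have hpt (z : Z) : |β * g z - G β z| ≤ β * (ε / 2) := by
    rw [← mul_div_cancel₀ (G β z) hβ.ne', ← mul_sub, abs_mul, abs_of_pos hβ, ← Real.dist_eq]
    exact mul_le_mul_of_nonneg_left (hclose z).le hβ.le
  have h := abs_log_integral_exp_sub_le (m := m)
    (integrable_exp_of_continuous (continuous_const.mul hg)) (integrable_exp_of_continuous hGβ) hpt
  rw [Real.dist_0_eq_abs, abs_dist, Real.dist_eq, ← mul_sub, abs_mul, abs_of_pos (inv_pos.2 hβ)]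
  calc β⁻¹ * |log (∫ z, exp (β * g z) ∂m) - log (∫ z, exp (G β z) ∂m)|
      ≤ β⁻¹ * (β * (ε / 2)) := mul_le_mul_of_nonneg_left h (inv_nonneg.2 hβ.le)
    _ < ε := by rw [inv_mul_cancel_left₀ hβ.ne']; linarith

end Laplace

end MeasureTheory

lemma continuous_of_abs_sub_le_mul_dist_add_dist {X Y : Type*} [PseudoMetricSpace X]
    [PseudoMetricSpace Y] {c : X × Y → ℝ} {L : ℝ}
    (hc : ∀ p q : X × Y, |c p - c q| ≤ L * (dist p.1 q.1 + dist p.2 q.2)) : Continuous c := by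
  refine (LipschitzWith.of_dist_le' (K := 2 * |L|) fun p q => ?_).continuous
  have h₁ : dist p.1 q.1 ≤ dist p q := by rw [Prod.dist_eq]; exact le_max_left _ _
  have h₂ : dist p.2 q.2 ≤ dist p q := by rw [Prod.dist_eq]; exact le_max_right _ _
  calc dist (c p) (c q) ≤ L * (dist p.1 q.1 + dist p.2 q.2) := hc p q
    _ ≤ |L| * (dist p.1 q.1 + dist p.2 q.2) :=
        mul_le_mul_of_nonneg_right (le_abs_self L) (by positivity)
    _ ≤ |L| * (dist p q + dist p q) := mul_le_mul_of_nonneg_left (by linarith) (abs_nonneg L)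
    _ = 2 * |L| * dist p q := by ring

theorem stmt14_general
    {X Y : Type*}
    [MetricSpace X] [CompactSpace X] [MeasurableSpace X] [BorelSpace X]
    [MetricSpace Y] [CompactSpace Y] [MeasurableSpace Y] [BorelSpace Y]
    (μ : Measure X) [IsProbabilityMeasure μ] [μ.IsOpenPosMeasure]
    (ν : Measure Y) [IsProbabilityMeasure ν] [ν.IsOpenPosMeasure]
    (c : X × Y → ℝ) (L : ℝ)
    (hc : ∀ p q : X × Y, |c p - c q| ≤ L * (dist p.1 q.1 + dist p.2 q.2))
    (A : X × Y → ℝ) (hA : A = fun p => - c p)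
    (φF : ℝ → X → ℝ) (ψF : ℝ → Y → ℝ)
    (hφc : ∀ β : ℝ, 0 < β → Continuous (φF β))
    (hψc : ∀ β : ℝ, 0 < β → Continuous (ψF β))
    (πF : ℝ → Measure (X × Y))
    (hπF : ∀ β : ℝ, πF β = (μ.prod ν).withDensity
      (fun p => ENNReal.ofReal (Real.exp (β * A p + φF β p.1 + ψF β p.2))))
    (φ : X → ℝ) (ψ : Y → ℝ)
    (hφ : TendstoUniformly (fun β x => φF β x / β) φ atTop)
    (hψ : TendstoUniformly (fun β y => ψF β y / β) ψ atTop)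
    (f : X × Y → ℝ) (hf : Continuous f) :
    Tendsto
      (fun β : ℝ => β⁻¹ * Real.log (∫ p, Real.exp (β * f p) ∂(πF β)))
      atTop
      (nhds (⨆ p : X × Y, (A p + φ p.1 + ψ p.2 + f p))) := by
  have hA_cont : Continuous A := hA ▸ (continuous_of_abs_sub_le_mul_dist_add_dist hc).neg
  set G : ℝ → X × Y → ℝ := fun β p => β * A p + φF β p.1 + ψF β p.2 + β * f p
  have hG : ∀ᶠ β in atTop, Continuous (G β) := (eventually_gt_atTop 0).mono fun β hβ => by
    have := hφc β hβ; have := hψc β hβ; fun_prop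
  have hGg : TendstoUniformly (fun β p => G β p / β) (fun p => A p + φ p.1 + ψ p.2 + f p)
      atTop := by
    refine Metric.tendstoUniformly_iff.2 fun ε hε => ?_
    filter_upwards [eventually_gt_atTop 0, Metric.tendstoUniformly_iff.1 hφ (ε / 2) (half_pos hε),
      Metric.tendstoUniformly_iff.1 hψ (ε / 2) (half_pos hε)] with β hβ hφβ hψβ p
    have hGβ : G β p / β = A p + φF β p.1 / β + ψF β p.2 / β + f p := by
      simp only [G]; field_simp
    have e₁ := hφβ p.1
    have e₂ := hψβ p.2
    rw [hGβ, Real.dist_eq, abs_lt] at *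
    constructor <;> linarith
  refine (tendsto_inv_mul_log_integral_exp_of_tendstoUniformly (μ.prod ν) hG hGg).congr' ?_
  filter_upwards [eventually_gt_atTop 0] with β hβ
  have := hφc β hβ; have := hψc β hβ
  rw [hπF, integral_withDensity_ofReal_exp (by fun_prop)]
  simp only [G, ← Real.exp_add]

theorem stmt14
    {X Y : Type*}
    [MetricSpace X] [CompactSpace X] [MeasurableSpace X] [BorelSpace X]
    [MetricSpace Y] [CompactSpace Y] [MeasurableSpace Y] [BorelSpace Y]
    (μ : Measure X) [IsProbabilityMeasure μ] [μ.IsOpenPosMeasure]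
    (ν : Measure Y) [IsProbabilityMeasure ν] [ν.IsOpenPosMeasure]
    (c : X × Y → ℝ) (L : ℝ)
    (hc : ∀ p q : X × Y, |c p - c q| ≤ L * (dist p.1 q.1 + dist p.2 q.2))
    (A : X × Y → ℝ) (hA : A = fun p => - c p)
    (φF : ℝ → X → ℝ) (ψF : ℝ → Y → ℝ)
    (hφc : ∀ β : ℝ, 0 < β → Continuous (φF β))
    (hψc : ∀ β : ℝ, 0 < β → Continuous (ψF β))
    (h1 : ∀ β : ℝ, 0 < β → ∀ y : Y,
      ∫ x, Real.exp (β * A (x, y) + φF β x + ψF β y) ∂μ = 1)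
    (h2 : ∀ β : ℝ, 0 < β → ∀ x : X,
      ∫ y, Real.exp (β * A (x, y) + φF β x + ψF β y) ∂ν = 1)
    (πF : ℝ → Measure (X × Y))
    (hπF : ∀ β : ℝ, πF β = (μ.prod ν).withDensity
      (fun p => ENNReal.ofReal (Real.exp (β * A p + φF β p.1 + ψF β p.2))))
    (φ : X → ℝ) (ψ : Y → ℝ)
    (hφ : TendstoUniformly (fun β x => φF β x / β) φ atTop)
    (hψ : TendstoUniformly (fun β y => ψF β y / β) ψ atTop)
    (f : X × Y → ℝ) (hf : Continuous f) :
    Tendsto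
      (fun β : ℝ => β⁻¹ * Real.log (∫ p, Real.exp (β * f p) ∂(πF β)))
      atTop
      (nhds (⨆ p : X × Y, (A p + φ p.1 + ψ p.2 + f p))) :=
  stmt14_general μ ν c L hc A hA φF ψF hφc hψc πF hπF φ ψ hφ hψ f hf
end
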